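/- arXiv:2206.02103 — 2 statements merged into one kernel-verified Lean document; each statement's English description precedes it below -/
import Mathlib

section
/- Let α < 0, β < 0, and 0 < a < 1 satisfy a < √(-β)/(√(-β)+√(-α)). Then there exists c > 0 such that a = λ₁⁻(c)/(λ₁⁻(c) - λ₀⁺(c)), where λ₀⁺(c) = (c + √(c² - 4α))/2 and λ₁⁻(c) = (c - √(c² - 4β))/2. -/
theorem stmt_5 (α β a : ℝ) (hα : α < 0) (hβ : β < 0) (ha : 0 < a) (ha1 : a < 1)
    (haa : a < Real.sqrt (-β) / (Real.sqrt (-β) + Real.sqrt (-α))) :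
    ∃ c : ℝ, 0 < c ∧
      a = ((c - Real.sqrt (c ^ 2 - 4 * β)) / 2) /
        ((c - Real.sqrt (c ^ 2 - 4 * β)) / 2 - (c + Real.sqrt (c ^ 2 - 4 * α)) / 2) := by
  set g : ℝ → ℝ := fun c =>
    (Real.sqrt (c ^ 2 - 4 * β) - c) / (Real.sqrt (c ^ 2 - 4 * β) + Real.sqrt (c ^ 2 - 4 * α))
    with hg
  have hb : ∀ c : ℝ, 0 < Real.sqrt (c ^ 2 - 4 * β) :=
    fun c => Real.sqrt_pos.mpr (by nlinarith [sq_nonneg c])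
  have hA : ∀ c : ℝ, 0 < Real.sqrt (c ^ 2 - 4 * α) :=
    fun c => Real.sqrt_pos.mpr (by nlinarith [sq_nonneg c])
  have hden : ∀ c : ℝ, 0 < Real.sqrt (c ^ 2 - 4 * β) + Real.sqrt (c ^ 2 - 4 * α) :=
    fun c => by linarith [hb c, hA c]
  have hcont : Continuous g := by
    apply Continuous.div
    · fun_prop
    · fun_prop
    · exact fun c => ne_of_gt (hden c)
  -- value at 0
  have hsq0 : ∀ x : ℝ, x < 0 → Real.sqrt ((0:ℝ) ^ 2 - 4 * x) = 2 * Real.sqrt (-x) := by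
    intro x hx
    rw [show (0:ℝ) ^ 2 - 4 * x = 2 ^ 2 * (-x) by ring, Real.sqrt_mul (by positivity),
      Real.sqrt_sq (by norm_num)]
  have hg0 : a < g 0 := by
    have h1 := hsq0 β hβ
    have h2 := hsq0 α hα
    have hbp : 0 < Real.sqrt (-β) := Real.sqrt_pos.mpr (by linarith)
    have hap : 0 ≤ Real.sqrt (-α) := Real.sqrt_nonneg _
    have : g 0 = Real.sqrt (-β) / (Real.sqrt (-β) + Real.sqrt (-α)) := by
      simp only [hg, h1, h2]
      rw [div_eq_div_iff (by linarith) (by linarith)]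
      ring
    linarith [this ▸ haa]
  -- choice of M
  set M : ℝ := Real.sqrt (-2 * β / a) + 1 with hM
  have hMpos : 0 < M := by positivity
  have hM2 : -2 * β < a * M ^ 2 := by
    have ht : 0 < -2 * β / a := div_pos (by linarith) ha
    have h1 : Real.sqrt (-2 * β / a) ^ 2 = -2 * β / a := Real.sq_sqrt ht.le
    have h2 : -2 * β / a < M ^ 2 := by
      nlinarith [Real.sqrt_nonneg (-2 * β / a)]
    calc -2 * β = a * (-2 * β / a) := by field_simp
    _ < a * M ^ 2 := by nlinarith
  have hbM : M < Real.sqrt (M ^ 2 - 4 * β) := by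
    nlinarith [Real.sq_sqrt (show (0:ℝ) ≤ M ^ 2 - 4 * β by nlinarith), hb M, hMpos]
  have haM : M < Real.sqrt (M ^ 2 - 4 * α) := by
    nlinarith [Real.sq_sqrt (show (0:ℝ) ≤ M ^ 2 - 4 * α by nlinarith), hA M, hMpos]
  have hgM : g M < a := by
    rw [hg]
    rw [div_lt_iff₀ (hden M)]
    have hsq : Real.sqrt (M ^ 2 - 4 * β) ^ 2 = M ^ 2 - 4 * β :=
      Real.sq_sqrt (by nlinarith)
    nlinarith [hb M, hA M, hMpos, mul_pos ha hMpos]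
  -- IVT
  have hmem : a ∈ Set.Ico (g M) (g 0) := ⟨hgM.le, hg0⟩
  obtain ⟨c, hc, hgc⟩ := intermediate_value_Ioc' hMpos.le hcont.continuousOn hmem
  refine ⟨c, hc.1, ?_⟩
  have hbc := hb c
  have hac := hA c
  have heq : (c - Real.sqrt (c ^ 2 - 4 * β)) / 2 - (c + Real.sqrt (c ^ 2 - 4 * α)) / 2
      = -(Real.sqrt (c ^ 2 - 4 * β) + Real.sqrt (c ^ 2 - 4 * α)) / 2 := by ring
  rw [heq, ← hgc, hg]
  rw [div_eq_div_iff (ne_of_gt (hden c)) (ne_of_lt (by linarith))]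
  ring
end

section
/- Let w solve w_t - w_xx = K·w on ℝ × (0,∞) with bounded initial data w(·,0) satisfying w(x,0) = 0 for x ≥ M and 0 ≤ w(x,0) ≤ 1 for x < M, where K > 0. Then for all t > 0 and x ≥ M + √(4K)·t, |w(x,t)| ≤ 1/√(4Kt). -/
open MeasureTheory

set_option maxHeartbeats 1000000 in
theorem stmt_15 (K M : ℝ) (hK : 0 < K)
    (w₀ : ℝ → ℝ) (w : ℝ → ℝ → ℝ)
    (hw₀zero : ∀ x ≥ M, w₀ x = 0)
    (hw₀bd : ∀ x < M, 0 ≤ w₀ x ∧ w₀ x ≤ 1)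
    (hmild : ∀ x : ℝ, ∀ t > (0 : ℝ),
      w x t = (Real.exp (K * t) / (2 * Real.sqrt (Real.pi * t))) *
        ∫ y : ℝ, Real.exp (-(x - y) ^ 2 / (4 * t)) * w₀ y) :
    ∀ t > (0 : ℝ), ∀ x ≥ M + Real.sqrt (4 * K) * t,
      |w x t| ≤ 1 / Real.sqrt (4 * K * t) := by
  intro t ht x hx
  have hsqK : 0 < Real.sqrt (4 * K) := Real.sqrt_pos.mpr (by linarith)
  set a : ℝ := x - M with ha_def
  have haK : Real.sqrt (4 * K) * t ≤ a := by simp only [ha_def]; linarith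
  have ha : 0 < a := lt_of_lt_of_le (by positivity) haK
  -- the exp bound constant
  set B : ℝ := 2 * t / a * Real.exp (-a ^ 2 / (4 * t)) with hB_def
  have hBpos : 0 < B := by positivity
  -- the integral bound
  have hIbound : |∫ y : ℝ, Real.exp (-(x - y) ^ 2 / (4 * t)) * w₀ y| ≤ B := by
    by_cases hint : Integrable (fun y : ℝ => Real.exp (-(x - y) ^ 2 / (4 * t)) * w₀ y)
    · -- bound by integral of the dominating function
      set g : ℝ → ℝ := fun y => (x - y) / a * Real.exp (-(x - y) ^ 2 / (4 * t)) with hg_def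
      have hb4t : 0 < (4 * t)⁻¹ := by positivity
      -- integrability of (x - y) * exp(-(x-y)^2/(4t))
      have hint2 : Integrable (fun y : ℝ => (x - y) * Real.exp (-(x - y) ^ 2 / (4 * t))) := by
        have h0 : Integrable (fun u : ℝ => u * Real.exp (-(4 * t)⁻¹ * u ^ 2)) :=
          integrable_mul_exp_neg_mul_sq hb4t
        have h1 := h0.comp_sub_left x
        refine h1.congr ?_
        filter_upwards with y
        rw [show -(4 * t)⁻¹ * (x - y) ^ 2 = -(x - y) ^ 2 / (4 * t) by ring]
      have hgint : Integrable g := by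
        have := hint2.div_const a
        refine this.congr ?_
        filter_upwards with y
        simp only [hg_def]
        ring
      have hGint : Integrable ((Set.Iic M).indicator g) :=
        hgint.indicator measurableSet_Iic
      have hle : ∀ y : ℝ, ‖Real.exp (-(x - y) ^ 2 / (4 * t)) * w₀ y‖ ≤
          (Set.Iic M).indicator g y := by
        intro y
        by_cases hy : y ≤ M
        · rw [Set.indicator_of_mem (show y ∈ Set.Iic M from hy)]
          rcases eq_or_lt_of_le hy with rfl | hy'
          · rw [hw₀zero y le_rfl, mul_zero, norm_zero]
            have : (1 : ℝ) ≤ (x - y) / a := by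
              rw [le_div_iff₀ ha]; simp only [ha_def]; linarith
            simp only [hg_def]
            positivity
          · obtain ⟨h0, h1⟩ := hw₀bd y hy'
            have hxy : a ≤ x - y := by simp only [ha_def]; linarith
            have h1a : (1 : ℝ) ≤ (x - y) / a := (le_div_iff₀ ha).mpr (by linarith)
            rw [Real.norm_eq_abs, abs_mul, abs_of_nonneg (Real.exp_pos _).le,
              abs_of_nonneg h0]
            calc Real.exp (-(x - y) ^ 2 / (4 * t)) * w₀ y
                ≤ Real.exp (-(x - y) ^ 2 / (4 * t)) * 1 :=
                  mul_le_mul_of_nonneg_left h1 (Real.exp_pos _).le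
              _ = Real.exp (-(x - y) ^ 2 / (4 * t)) := mul_one _
              _ ≤ (x - y) / a * Real.exp (-(x - y) ^ 2 / (4 * t)) := by
                  nlinarith [Real.exp_pos (-(x - y) ^ 2 / (4 * t))]
        · rw [Set.indicator_of_notMem (show y ∉ Set.Iic M from hy), hw₀zero y (le_of_not_ge hy), mul_zero, norm_zero]
      -- compute the integral of the dominating function
      have hFTC : (∫ y in Set.Iic M, (x - y) * Real.exp (-(x - y) ^ 2 / (4 * t)))
          = 2 * t * Real.exp (-a ^ 2 / (4 * t)) := by
        have hder : ∀ y ∈ Set.Iio M, HasDerivAt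
            (fun y : ℝ => 2 * t * Real.exp (-(x - y) ^ 2 / (4 * t)))
            ((x - y) * Real.exp (-(x - y) ^ 2 / (4 * t))) y := by
          intro y _
          have h1 : HasDerivAt (fun y : ℝ => x - y) (-1) y := by
            simpa using (hasDerivAt_id y).const_sub x
          have h2 := ((h1.pow 2).neg).div_const (4 * t)
          have h3 := (h2.exp).const_mul (2 * t)
          refine h3.congr_deriv ?_
          norm_num
          field_simp
          ring
        have hcont : ContinuousWithinAt
            (fun y : ℝ => 2 * t * Real.exp (-(x - y) ^ 2 / (4 * t))) (Set.Iic M) M := by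
          apply Continuous.continuousWithinAt
          continuity
        have htend : Filter.Tendsto (fun y : ℝ => 2 * t * Real.exp (-(x - y) ^ 2 / (4 * t)))
            Filter.atBot (nhds 0) := by
          have h1 : Filter.Tendsto (fun y : ℝ => x - y) Filter.atBot Filter.atTop := by
            have := Filter.tendsto_atTop_add_const_left Filter.atBot x
              (Filter.tendsto_neg_atBot_atTop (G := ℝ))
            simpa [sub_eq_add_neg] using this
          have h2 : Filter.Tendsto (fun y : ℝ => (x - y) ^ 2) Filter.atBot Filter.atTop :=
            (Filter.tendsto_pow_atTop (two_ne_zero)).comp h1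
          have h3 : Filter.Tendsto (fun y : ℝ => -(x - y) ^ 2 / (4 * t))
              Filter.atBot Filter.atBot := by
            simp only [neg_div]
            exact Filter.tendsto_neg_atTop_atBot.comp (h2.atTop_div_const (by positivity))
          have h4 := Real.tendsto_exp_atBot.comp h3
          have := h4.const_mul (2 * t)
          simpa using this
        have := integral_Iic_of_hasDerivAt_of_tendsto hcont hder
          (hint2.integrableOn) htend
        rw [this]
        simp [ha_def]
      calc |∫ y : ℝ, Real.exp (-(x - y) ^ 2 / (4 * t)) * w₀ y|
          = ‖∫ y : ℝ, Real.exp (-(x - y) ^ 2 / (4 * t)) * w₀ y‖ :=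
            (Real.norm_eq_abs _).symm
        _ ≤ ∫ y : ℝ, ‖Real.exp (-(x - y) ^ 2 / (4 * t)) * w₀ y‖ :=
            norm_integral_le_integral_norm _
        _ ≤ ∫ y : ℝ, (Set.Iic M).indicator g y :=
            integral_mono hint.norm hGint hle
        _ = ∫ y in Set.Iic M, g y := integral_indicator measurableSet_Iic
        _ = (∫ y in Set.Iic M, (x - y) * Real.exp (-(x - y) ^ 2 / (4 * t))) / a := by
            rw [← integral_div]
            congr 1 with y
            simp only [hg_def]
            ring
        _ = B := by rw [hFTC, hB_def]; ring
    · rw [integral_undef hint]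
      simpa using hBpos.le
  -- now the arithmetic
  have hC : 0 < Real.exp (K * t) / (2 * Real.sqrt (Real.pi * t)) := by
    have : 0 < Real.pi * t := by positivity
    have := Real.sqrt_pos.mpr this
    positivity
  rw [hmild x t ht, abs_mul, abs_of_nonneg hC.le]
  have hstep : Real.exp (K * t) / (2 * Real.sqrt (Real.pi * t)) *
      |∫ y : ℝ, Real.exp (-(x - y) ^ 2 / (4 * t)) * w₀ y| ≤
      Real.exp (K * t) / (2 * Real.sqrt (Real.pi * t)) * B :=
    mul_le_mul_of_nonneg_left hIbound hC.le
  refine hstep.trans ?_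
  -- exp(Kt) * exp(-a²/4t) ≤ 1
  have hexp : Real.exp (K * t) * Real.exp (-a ^ 2 / (4 * t)) ≤ 1 := by
    rw [← Real.exp_add, Real.exp_le_one_iff]
    have ha2 : 4 * K * t ^ 2 ≤ a ^ 2 := by
      have h1 := mul_self_le_mul_self (by positivity : (0:ℝ) ≤ Real.sqrt (4 * K) * t) haK
      have h2 := Real.sq_sqrt (by linarith : (0:ℝ) ≤ 4 * K)
      nlinarith [h1, h2]
    have h4t : (0:ℝ) < 4 * t := by positivity
    rw [neg_div, ← sub_eq_add_neg, sub_nonpos, le_div_iff₀ h4t]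
    nlinarith [ha2]
  have hπt : 0 < Real.sqrt (Real.pi * t) := Real.sqrt_pos.mpr (by positivity)
  have hEq : Real.exp (K * t) / (2 * Real.sqrt (Real.pi * t)) * B =
      (Real.exp (K * t) * Real.exp (-a ^ 2 / (4 * t))) * (t / (Real.sqrt (Real.pi * t) * a)) := by
    rw [hB_def]
    field_simp
  rw [hEq]
  have h2 : t / (Real.sqrt (Real.pi * t) * a) ≤ 1 / Real.sqrt (4 * K * t) := by
    have hsKt : 0 < Real.sqrt (4 * K * t) := Real.sqrt_pos.mpr (by positivity)
    rw [div_le_div_iff₀ (by positivity) hsKt]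
    -- need t * √(4Kt) ≤ √(πt) * a
    have h4kt : Real.sqrt (4 * K * t) = Real.sqrt (4 * K) * Real.sqrt t := by
      rw [← Real.sqrt_mul (by linarith : (0:ℝ) ≤ 4 * K)]
    have hπt' : Real.sqrt t ≤ Real.sqrt (Real.pi * t) := by
      have hle : t ≤ Real.pi * t := by nlinarith [Real.pi_gt_three]
      exact Real.sqrt_le_sqrt hle
    have hst : 0 < Real.sqrt t := Real.sqrt_pos.mpr ht
    have key : t * Real.sqrt (4 * K * t) ≤ Real.sqrt (Real.pi * t) * a := by
      calc t * Real.sqrt (4 * K * t) = Real.sqrt t * (Real.sqrt (4 * K) * t) := by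
            rw [h4kt]; ring
        _ ≤ Real.sqrt (Real.pi * t) * (Real.sqrt (4 * K) * t) := by
            apply mul_le_mul_of_nonneg_right hπt'; positivity
        _ ≤ Real.sqrt (Real.pi * t) * a :=
            mul_le_mul_of_nonneg_left haK hπt.le
    nlinarith [key, hπt, ha]
  calc (Real.exp (K * t) * Real.exp (-a ^ 2 / (4 * t))) * (t / (Real.sqrt (Real.pi * t) * a))
      ≤ 1 * (t / (Real.sqrt (Real.pi * t) * a)) :=
        mul_le_mul_of_nonneg_right hexp (by positivity)
    _ = t / (Real.sqrt (Real.pi * t) * a) := one_mul _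
    _ ≤ 1 / Real.sqrt (4 * K * t) := h2
end
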